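/- Let λ = ((n), ∅, …, ∅) be the r-partition whose first component is the one-row partition (n) and whose other components are empty. Then for every r-partition μ of size n: β_{λμ} = 1 if μ = ((n_1), (n_2), …, (n_r)) for some nonnegative integers n_1,…,n_r with n_1+…+n_r = n (each component a one-row partition or empty), and β_{λμ} = 0 otherwise. -/
import Mathlib


open scoped BigOperators

namespace CQSA

/-- A box of a multidiagram: component `k`, row `i`, column `j` (0-indexed column). -/
abbrev Box (r : ℕ) (m : Fin r → ℕ) : Type := Σ k : Fin r, Fin (m k) × ℕ

/-- An entry of a tableau: component `c`, letter `a` (0-indexed). -/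
abbrev Entry (r : ℕ) (m : Fin r → ℕ) : Type := Σ c : Fin r, Fin (m c)

/-- Multicompositions with `m k` parts in component `k`. -/
abbrev MComp (r : ℕ) (m : Fin r → ℕ) : Type := (k : Fin r) → Fin (m k) → ℕ

variable {r : ℕ} {m : Fin r → ℕ}

/-- The size `|λ|` of a multicomposition. -/
def size (lam : MComp r m) : ℕ := ∑ k, ∑ i, lam k i

/-- A multicomposition is a multipartition if each component is weakly decreasing. -/
def IsMPartition (lam : MComp r m) : Prop := ∀ k, Antitone (lam k)

/-- `ζ(λ) = (|λ^(1)|, …, |λ^(r)|)`. -/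
def zeta (lam : MComp r m) : Fin r → ℕ := fun k => ∑ i, lam k i

/-- Dominance order: `mu ⊴ lam`. -/
def DomLE (mu lam : MComp r m) : Prop :=
  ∀ (k : Fin r) (i : Fin (m k)),
    ((∑ l ∈ Finset.univ.filter (fun l => l < k), ∑ j, mu l j) +
        ∑ j ∈ Finset.univ.filter (fun j => j ≤ i), mu k j) ≤
      ((∑ l ∈ Finset.univ.filter (fun l => l < k), ∑ j, lam l j) +
        ∑ j ∈ Finset.univ.filter (fun j => j ≤ i), lam k j)

/-- Membership of a box in the diagram `[λ]`. -/
def InDiag (lam : MComp r m) (x : Box r m) : Prop := x.2.2 < lam x.1 x.2.1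

/-- The skew diagram `[λ] \ [ν]` as a predicate on boxes. -/
def SkewD (lamBig lamSmall : MComp r m) (x : Box r m) : Prop :=
  InDiag lamBig x ∧ ¬ InDiag lamSmall x

/-- Order on entries: `(a,c) ≤ (a',c')` iff `c < c'`, or `c = c'` and `a ≤ a'`. -/
def entryLE (e f : Entry r m) : Prop :=
  (e.1 : ℕ) < (f.1 : ℕ) ∨ ((e.1 : ℕ) = (f.1 : ℕ) ∧ (e.2 : ℕ) ≤ (f.2 : ℕ))

/-- Strict order on entries. -/
def entryLT (e f : Entry r m) : Prop :=
  (e.1 : ℕ) < (f.1 : ℕ) ∨ ((e.1 : ℕ) = (f.1 : ℕ) ∧ (e.2 : ℕ) < (f.2 : ℕ))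

/-- Reading order on boxes: `x ⪰ y`, i.e. `x ≻ y` or `x = y`, where
`(i,j,k) ≻ (i',j',k')` iff `k > k'`, or `k = k'` and `j > j'`, or
`k = k'`, `j = j'` and `i < i'`. -/
def BoxGE (x y : Box r m) : Prop :=
  (y.1 : ℕ) < (x.1 : ℕ) ∨
    ((x.1 : ℕ) = (y.1 : ℕ) ∧
      (y.2.2 < x.2.2 ∨ (x.2.2 = y.2.2 ∧ (x.2.1 : ℕ) ≤ (y.2.1 : ℕ))))

/-- Semistandardness of a filling `T` of the set of boxes `D` with weight `mu`. -/
structure IsSST (D : Box r m → Prop) (mu : MComp r m)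
    (T : {x : Box r m // D x} → Entry r m) : Prop where
  comp_le : ∀ x : {x : Box r m // D x}, (x.1.1 : ℕ) ≤ ((T x).1 : ℕ)
  row_weak : ∀ x y : {x : Box r m // D x},
    x.1.1 = y.1.1 → (x.1.2.1 : ℕ) = (y.1.2.1 : ℕ) → x.1.2.2 + 1 = y.1.2.2 →
      entryLE (T x) (T y)
  col_strict : ∀ x y : {x : Box r m // D x},
    x.1.1 = y.1.1 → (x.1.2.1 : ℕ) + 1 = (y.1.2.1 : ℕ) → x.1.2.2 = y.1.2.2 →
      entryLT (T x) (T y)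
  weight : ∀ e : Entry r m, mu e.1 e.2 = Nat.card {x : {x : Box r m // D x} // T x = e}

/-- Singularity of a tableau: every prefix of the component-`c` reading word has
weakly decreasing content, for every `c`. -/
def IsSingular (D : Box r m → Prop) (T : {x : Box r m // D x} → Entry r m) : Prop :=
  ∀ (b : {x : Box r m // D x}) (a : ℕ),
    Nat.card {y : {x : Box r m // D x} //
        (T y).1 = (T b).1 ∧ BoxGE y.1 b.1 ∧ ((T y).2 : ℕ) = a + 1} ≤
      Nat.card {y : {x : Box r m // D x} //
        (T y).1 = (T b).1 ∧ BoxGE y.1 b.1 ∧ ((T y).2 : ℕ) = a}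

/-- The number of semistandard tableaux on the boxes `D` with weight `mu`. -/
noncomputable def nSST (D : Box r m → Prop) (mu : MComp r m) : ℕ :=
  Nat.card {T : {x : Box r m // D x} → Entry r m // IsSST D mu T}

/-- The number of singular semistandard tableaux on the boxes `D` with weight `mu`. -/
noncomputable def nSingSST (D : Box r m → Prop) (mu : MComp r m) : ℕ :=
  Nat.card {T : {x : Box r m // D x} → Entry r m // IsSST D mu T ∧ IsSingular D T}

/-- `#CT₀(λ,μ)`: the number of semistandard tableaux of shape `λ` and weight `μ`. -/
noncomputable def nCT (lam mu : MComp r m) : ℕ := nSST (InDiag lam) mu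

/-- `β_{λμ}`: the number of singular semistandard tableaux of shape `λ` and weight `μ`. -/
noncomputable def beta (lam mu : MComp r m) : ℕ := nSingSST (InDiag lam) mu


/-- The Kostka number `K_{ν μ}`: the number of ordinary semistandard Young
tableaux of shape `ν` (rows indexed by `ℕ`) and weight `μ` (a finite sequence of
nonnegative integers, indexed by the linearly ordered alphabet `ι`). -/
noncomputable def kostka (nu : ℕ → ℕ) {ι : Type} [LinearOrder ι] (mu : ι → ℕ) : ℕ :=
  Nat.card {T : {x : ℕ × ℕ // x.2 < nu x.1} → ι //
    (∀ x y : {x : ℕ × ℕ // x.2 < nu x.1}, x.1.1 = y.1.1 → x.1.2 + 1 = y.1.2 → T x ≤ T y) ∧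
    (∀ x y : {x : ℕ × ℕ // x.2 < nu x.1}, x.1.1 + 1 = y.1.1 → x.1.2 = y.1.2 → T x < T y) ∧
    (∀ a : ι, mu a = Nat.card {x : {x : ℕ × ℕ // x.2 < nu x.1} // T x = a})}

/-- Extension of a finite tuple by zeros. -/
def extF {L : ℕ} (f : Fin L → ℕ) : ℕ → ℕ := fun i => if h : i < L then f ⟨i, h⟩ else 0

/-- The Schur polynomial of the partition `ν` (of size `d`) in `N` variables:
`s_ν(x_1,…,x_N) = ∑_μ K_{νμ} x^μ`. -/
noncomputable def schurP (N d : ℕ) (nu : ℕ → ℕ) : MvPolynomial (Fin N) ℤ :=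
  ∑ f ∈ (Fintype.piFinset fun _ : Fin N => Finset.range (d + 1)) |>.filter
      (fun f => ∑ i, f i = d),
    (kostka nu f : ℤ) • MvPolynomial.monomial (Finsupp.equivFunOnFinite.symm f) 1

/-- `lr` is the family of Littlewood–Richardson coefficients: for all partitions
`α`, `β`, the product of the Schur polynomials `s_α s_β` (in any number `N` of
variables containing the supports) equals `∑_γ lr α β γ • s_γ`, the sum running
over all partitions `γ` of size `|α| + |β|` with at most `N` parts. -/
noncomputable def IsLR (lr : (ℕ → ℕ) → (ℕ → ℕ) → (ℕ → ℕ) → ℕ) : Prop :=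
  ∀ (N : ℕ) (al be : ℕ → ℕ), Antitone al → Antitone be →
    (∀ i, N ≤ i → al i = 0) → (∀ i, N ≤ i → be i = 0) →
    schurP N (∑ i ∈ Finset.range N, al i) al *
        schurP N (∑ i ∈ Finset.range N, be i) be =
      ∑ g ∈ (Fintype.piFinset fun _ : Fin N =>
            Finset.range ((∑ i ∈ Finset.range N, al i) + (∑ i ∈ Finset.range N, be i) + 1)) |>.filter
          (fun g => (∀ i j : Fin N, i ≤ j → g j ≤ g i) ∧
            ∑ i, g i = (∑ i ∈ Finset.range N, al i) + (∑ i ∈ Finset.range N, be i)),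
        (lr al be (extF g) : ℤ) •
          schurP N ((∑ i ∈ Finset.range N, al i) + (∑ i ∈ Finset.range N, be i)) (extF g)

/-- The polynomial `tS_λ(x) = ∑_μ #CT₀(λ,μ) x^μ`, summed over all
`r`-compositions `μ` of size `d`, in the variables `x^{(k)}_i`. -/
noncomputable def tS (d : ℕ) (lam : MComp r m) : MvPolynomial (Entry r m) ℤ :=
  ∑ f ∈ (Fintype.piFinset fun _ : Entry r m => Finset.range (d + 1)) |>.filter
      (fun f => ∑ e, f e = d),
    (nCT lam (fun k i => f ⟨k, i⟩) : ℤ) •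
      MvPolynomial.monomial (Finsupp.equivFunOnFinite.symm f) 1

/-- `S_μ(x) = ∏_k s_{μ^{(k)}}(x^{(k)})`, the product of Schur polynomials. -/
noncomputable def SchurProd (mu : MComp r m) : MvPolynomial (Entry r m) ℤ :=
  ∏ k : Fin r, MvPolynomial.rename (fun i : Fin (m k) => (⟨k, i⟩ : Entry r m))
    (schurP (m k) (∑ i, mu k i) (extF (mu k)))

/-- Membership in `Θ(λ,μ)`: a chain `λ = λ_{⟨r⟩} ⊇ … ⊇ λ_{⟨0⟩} = ∅` of
`r`-partitions with `(λ_{⟨k⟩})^{(k+1)} = ∅` for `1 ≤ k ≤ r-1` and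
`|λ_{⟨k⟩}| - |λ_{⟨k-1⟩}| = |μ^{(k)}|` for `1 ≤ k ≤ r`. -/
def IsTheta (lam mu : MComp r m) (L : Fin (r + 1) → MComp r m) : Prop :=
  (∀ κ, IsMPartition (L κ)) ∧
  L (Fin.last r) = lam ∧
  (∀ (c : Fin r) (i : Fin (m c)), L 0 c i = 0) ∧
  (∀ (k : Fin r) (c : Fin r) (i : Fin (m c)), L k.castSucc c i ≤ L k.succ c i) ∧
  (∀ (k : ℕ) (h : k < r), 1 ≤ k →
    ∀ i : Fin (m ⟨k, h⟩), L ⟨k, Nat.lt_succ_of_lt h⟩ ⟨k, h⟩ i = 0) ∧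
  (∀ k : Fin r, size (L k.succ) = size (L k.castSucc) + ∑ i, mu k i)

/-- The multicomposition `(∅, …, ∅, w, ∅, …, ∅)` concentrated in component `k`. -/
def unitWeight (k : Fin r) (w : Fin (m k) → ℕ) : MComp r m :=
  fun c i => if h : c = k then w (Fin.cast (congrArg m h) i) else 0

/-- The index in `Fin r` of the `j`-th member of the `k`-th block, for blocks of
sizes `rs 0, …, rs (g-1)` with `∑ rs = r`. -/
def blockIdx {g : ℕ} (rs : Fin g → ℕ) (hsum : ∑ l, rs l = r) (k : Fin g) (j : Fin (rs k)) :
    Fin r :=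
  ⟨(∑ l ∈ Finset.univ.filter (fun l => l < k), rs l) + j, by
    classical
    have hj := j.isLt
    have h1 : (∑ l ∈ Finset.univ.filter (fun l => l < k), rs l) + rs k ≤ ∑ l, rs l := by
      have hk : k ∉ Finset.univ.filter (fun l => l < k) := by simp
      have h2 : (∑ l ∈ insert k (Finset.univ.filter (fun l => l < k)), rs l)
          = (∑ l ∈ Finset.univ.filter (fun l => l < k), rs l) + rs k := by
        rw [Finset.sum_insert hk]; ring
      rw [← h2]
      exact Finset.sum_le_sum_of_subset (Finset.subset_univ _)
    omega⟩

/-- The permutation of the variables `x^{(k)}_i` within the `k`-th set induced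
by `σ ∈ S_{m_k}`. -/
def blockPermFun (k : Fin r) (sg : Equiv.Perm (Fin (m k))) : Entry r m → Entry r m :=
  fun e => if h : e.1 = k then ⟨k, sg (Fin.cast (congrArg m h) e.2)⟩ else e


/-! ### Auxiliary material for `beta_row_first` -/

section RowAux

open Finset

lemma entry_ext' {e f : Entry r m} (h1 : (e.1 : ℕ) = (f.1 : ℕ)) (h2 : (e.2 : ℕ) = (f.2 : ℕ)) :
    e = f := by
  obtain ⟨c, a⟩ := e
  obtain ⟨c', a'⟩ := f
  simp only at h1 h2
  have hc : c = c' := Fin.ext h1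
  subst hc
  have ha : a = a' := Fin.ext h2
  rw [ha]

lemma entryLE_refl' (e : Entry r m) : entryLE e e := Or.inr ⟨rfl, le_rfl⟩

lemma entryLE_trans' {e f g : Entry r m} (h1 : entryLE e f) (h2 : entryLE f g) :
    entryLE e g := by
  unfold entryLE at *
  omega

lemma entryLE_comp_le {e f : Entry r m} (h : entryLE e f) : (e.1 : ℕ) ≤ (f.1 : ℕ) := by
  unfold entryLE at h; omega

/-! Pure `Fin n` monotone-word lemmas. -/

lemma fin_filter_card {n : ℕ} (q : ℕ → Prop) [DecidablePred q] :
    (Finset.univ.filter (fun j : Fin n => q (j : ℕ))).card = ((Finset.range n).filter q).card := by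
  refine Finset.card_bij (fun j _ => (j : ℕ)) ?_ ?_ ?_
  · intro a ha; simp at ha ⊢; exact ha
  · intro a _ b _ h; exact Fin.ext h
  · intro b hb; simp at hb; exact ⟨⟨b, hb.1⟩, by simp [hb.2], rfl⟩

lemma mono_lt_iff {n : ℕ} {g : Fin n → ℕ} (hg : Monotone g) (c : ℕ) (j : Fin n) :
    g j < c ↔ (j : ℕ) < (Finset.univ.filter (fun j => g j < c)).card := by
  constructor
  · intro h
    have hsub : Finset.univ.filter (fun j' : Fin n => (j' : ℕ) ≤ (j : ℕ)) ⊆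
        Finset.univ.filter (fun j' => g j' < c) := by
      intro a ha; simp at ha ⊢
      exact lt_of_le_of_lt (hg (show a ≤ j from ha)) h
    have h2 := Finset.card_le_card hsub
    have h3 : (Finset.univ.filter (fun j' : Fin n => (j' : ℕ) ≤ (j : ℕ))).card = (j : ℕ) + 1 := by
      rw [fin_filter_card (fun a => a ≤ (j : ℕ))]
      have he : (Finset.range n).filter (fun a => a ≤ (j : ℕ)) = Finset.range ((j : ℕ) + 1) := by
        ext a; simp; have := j.isLt; omega
      rw [he, Finset.card_range]
    omega
  · intro h
    by_contra hc
    push_neg at hc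
    have hsub : Finset.univ.filter (fun j' : Fin n => g j' < c) ⊆
        Finset.univ.filter (fun j' : Fin n => (j' : ℕ) < (j : ℕ)) := by
      intro a ha; simp at ha ⊢
      by_contra hb; push_neg at hb
      have := hg (show j ≤ a from hb)
      omega
    have h2 := Finset.card_le_card hsub
    have h3 : (Finset.univ.filter (fun j' : Fin n => (j' : ℕ) < (j : ℕ))).card = (j : ℕ) := by
      rw [fin_filter_card (fun a => a < (j : ℕ))]
      have he : (Finset.range n).filter (fun a => a < (j : ℕ)) = Finset.range (j : ℕ) := by
        ext a; simp; have := j.isLt; omega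
      rw [he, Finset.card_range]
    omega

lemma filter_lt_card_eq_sum {n : ℕ} (g : Fin n → ℕ) (c : ℕ) :
    (Finset.univ.filter (fun j => g j < c)).card
      = ∑ c' ∈ Finset.range c, (Finset.univ.filter (fun j => g j = c')).card := by
  induction c with
  | zero => simp
  | succ c ih =>
    rw [Finset.sum_range_succ, ← ih]
    have h1 : (Finset.univ.filter (fun j : Fin n => g j < c + 1))
        = (Finset.univ.filter (fun j => g j < c)) ∪ (Finset.univ.filter (fun j => g j = c)) := by
      rw [← Finset.filter_or]
      apply Finset.filter_congr
      intro j _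
      constructor <;> (intro; omega)
    rw [h1, Finset.card_union_of_disjoint]
    rw [Finset.disjoint_left]
    intro a ha hb; simp at ha hb; omega

lemma mono_unique {n : ℕ} {g g' : Fin n → ℕ} (hg : Monotone g) (hg' : Monotone g')
    (hfib : ∀ c, (Finset.univ.filter (fun j => g j = c)).card
      = (Finset.univ.filter (fun j => g' j = c)).card) : g = g' := by
  funext j
  have key : ∀ c, (g j < c ↔ g' j < c) := by
    intro c
    rw [mono_lt_iff hg c j, mono_lt_iff hg' c j, filter_lt_card_eq_sum, filter_lt_card_eq_sum]
    rw [Finset.sum_congr rfl (fun c' _ => hfib c')]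
  have h1 := (key (g j + 1)).mp (by omega)
  have h2 := (key (g' j + 1)).mpr (by omega)
  omega

/-! Partial sums and the step function `cf`. -/

def Ns (ns : Fin r → ℕ) (t : ℕ) : ℕ := ∑ k : Fin r, if (k : ℕ) < t then ns k else 0

lemma Ns_mono (ns : Fin r → ℕ) : Monotone (Ns ns) := by
  intro a b hab
  apply Finset.sum_le_sum
  intro k _; split_ifs <;> omega

lemma Ns_top (ns : Fin r → ℕ) : Ns ns r = ∑ k, ns k :=
  Finset.sum_congr rfl (fun k _ => if_pos k.isLt)

lemma Ns_succ (ns : Fin r → ℕ) (c : Fin r) : Ns ns ((c : ℕ) + 1) = Ns ns c + ns c := by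
  unfold Ns
  have h : ∀ k : Fin r, (if (k : ℕ) < (c : ℕ) + 1 then ns k else 0)
      = (if (k : ℕ) < (c : ℕ) then ns k else 0) + (if k = c then ns k else 0) := by
    intro k
    by_cases hk : k = c
    · subst hk; simp
    · have hv : (k : ℕ) ≠ (c : ℕ) := fun h => hk (Fin.ext h)
      rw [if_neg hk]
      split_ifs <;> omega
  rw [Finset.sum_congr rfl (fun k _ => h k), Finset.sum_add_distrib,
    Finset.sum_ite_eq' Finset.univ c ns, if_pos (Finset.mem_univ c)]

noncomputable def cf (ns : Fin r → ℕ) (j : ℕ) : ℕ :=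
  Nat.find (⟨r, Or.inr le_rfl⟩ : ∃ c, j < Ns ns (c + 1) ∨ r ≤ c)

lemma cf_mono (ns : Fin r → ℕ) {j j' : ℕ} (h : j ≤ j') : cf ns j ≤ cf ns j' := by
  apply Nat.find_le
  rcases Nat.find_spec (⟨r, Or.inr le_rfl⟩ : ∃ c, j' < Ns ns (c + 1) ∨ r ≤ c) with h1 | h1
  · exact Or.inl (lt_of_le_of_lt h h1)
  · exact Or.inr h1

lemma cf_lt {n : ℕ} {ns : Fin r → ℕ} (hr : 1 ≤ r) (hS : ∑ k, ns k = n) {j : ℕ} (hj : j < n) :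
    cf ns j < r := by
  have hp : j < Ns ns ((r - 1) + 1) ∨ r ≤ r - 1 := by
    left
    have he : r - 1 + 1 = r := by omega
    rw [he, Ns_top, hS]; exact hj
  have h2 : cf ns j ≤ r - 1 := Nat.find_le hp
  omega

lemma cf_spec1 {n : ℕ} {ns : Fin r → ℕ} (hr : 1 ≤ r) (hS : ∑ k, ns k = n) {j : ℕ} (hj : j < n) :
    j < Ns ns (cf ns j + 1) := by
  rcases Nat.find_spec (⟨r, Or.inr le_rfl⟩ : ∃ c, j < Ns ns (c + 1) ∨ r ≤ c) with h1 | h1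
  · exact h1
  · exact absurd h1 (Nat.not_le.mpr (cf_lt hr hS hj))

lemma cf_spec2 (ns : Fin r → ℕ) (j : ℕ) : Ns ns (cf ns j) ≤ j := by
  rcases Nat.eq_zero_or_pos (cf ns j) with h | h
  · rw [h]; unfold Ns; simp
  · have hmn := Nat.find_min (⟨r, Or.inr le_rfl⟩ : ∃ c, j < Ns ns (c + 1) ∨ r ≤ c)
      (show cf ns j - 1 < cf ns j by omega)
    push_neg at hmn
    have h1 := hmn.1
    have he : cf ns j - 1 + 1 = cf ns j := by omega
    rw [he] at h1
    omega

lemma cf_eq_iff {n : ℕ} {ns : Fin r → ℕ} (hr : 1 ≤ r) (hS : ∑ k, ns k = n) {j : ℕ} (hj : j < n)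
    (c : Fin r) : cf ns j = (c : ℕ) ↔ (Ns ns c ≤ j ∧ j < Ns ns ((c : ℕ) + 1)) := by
  constructor
  · intro h; rw [← h]; exact ⟨cf_spec2 ns j, cf_spec1 hr hS hj⟩
  · rintro ⟨h1, h2⟩
    have hle : cf ns j ≤ (c : ℕ) := Nat.find_le (Or.inl h2)
    have hge : (c : ℕ) ≤ cf ns j := by
      by_contra hcc
      push_neg at hcc
      have hs1 := cf_spec1 hr hS hj
      have := Ns_mono ns (show cf ns j + 1 ≤ (c : ℕ) by omega)
      omega
    omega

/-! The one-row diagram. -/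

variable {n : ℕ}

lemma lam_le {lam : MComp r m}
    (hlamdef : ∀ k i, lam k i = if (k : ℕ) = 0 ∧ (i : ℕ) = 0 then n else 0)
    (k : Fin r) (i : Fin (m k)) : lam k i ≤ n := by
  rw [hlamdef]; split_ifs <;> omega

lemma box_char {lam : MComp r m}
    (hlamdef : ∀ k i, lam k i = if (k : ℕ) = 0 ∧ (i : ℕ) = 0 then n else 0)
    (x : {x : Box r m // InDiag lam x}) :
    (x.1.1 : ℕ) = 0 ∧ (x.1.2.1 : ℕ) = 0 ∧ x.1.2.2 < n := by
  have h := x.2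
  unfold InDiag at h
  rw [hlamdef] at h
  split_ifs at h with hc
  · exact ⟨hc.1, hc.2, h⟩
  · omega

def bx (hr : 1 ≤ r) (hm : ∀ k, n ≤ m k) (lam : MComp r m)
    (hlamdef : ∀ k i, lam k i = if (k : ℕ) = 0 ∧ (i : ℕ) = 0 then n else 0)
    (j : ℕ) (hj : j < n) : {x : Box r m // InDiag lam x} :=
  ⟨⟨⟨0, hr⟩, (⟨0, lt_of_lt_of_le (Nat.lt_of_le_of_lt (Nat.zero_le j) hj) (hm _)⟩, j)⟩, by
    show j < lam _ _
    rw [hlamdef]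
    simpa using hj⟩

lemma box_eq {lam : MComp r m}
    (hlamdef : ∀ k i, lam k i = if (k : ℕ) = 0 ∧ (i : ℕ) = 0 then n else 0)
    (x y : {x : Box r m // InDiag lam x}) (h : x.1.2.2 = y.1.2.2) : x = y := by
  obtain ⟨hx1, hx2, hx3⟩ := box_char hlamdef x
  obtain ⟨hy1, hy2, hy3⟩ := box_char hlamdef y
  apply Subtype.ext
  obtain ⟨⟨k, i, j⟩, hx⟩ := x
  obtain ⟨⟨k', i', j'⟩, hy⟩ := y
  simp only at hx1 hx2 hy1 hy2 h ⊢
  have hk : k = k' := Fin.ext (by rw [hx1, hy1])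
  subst hk
  have hi : i = i' := Fin.ext (by rw [hx2, hy2])
  subst hi
  rw [h]

lemma bx_canon (hr : 1 ≤ r) (hm : ∀ k, n ≤ m k) (lam : MComp r m)
    (hlamdef : ∀ k i, lam k i = if (k : ℕ) = 0 ∧ (i : ℕ) = 0 then n else 0)
    (x : {x : Box r m // InDiag lam x}) :
    bx hr hm lam hlamdef x.1.2.2 (box_char hlamdef x).2.2 = x :=
  box_eq hlamdef _ _ rfl

lemma finite_sub {lam : MComp r m}
    (hlamdef : ∀ k i, lam k i = if (k : ℕ) = 0 ∧ (i : ℕ) = 0 then n else 0) :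
    Finite {x : Box r m // InDiag lam x} :=
  Finite.of_injective (fun x => (⟨x.1.2.2, (box_char hlamdef x).2.2⟩ : Fin n))
    (fun a b h => box_eq hlamdef a b (congrArg Fin.val h))

lemma card_eq (hr : 1 ≤ r) (hm : ∀ k, n ≤ m k) (lam : MComp r m)
    (hlamdef : ∀ k i, lam k i = if (k : ℕ) = 0 ∧ (i : ℕ) = 0 then n else 0)
    (p : {x : Box r m // InDiag lam x} → Prop) (q : Fin n → Prop) [DecidablePred q]
    (hpq : ∀ (j : ℕ) (hj : j < n), p (bx hr hm lam hlamdef j hj) ↔ q ⟨j, hj⟩) :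
    Nat.card {x : {x : Box r m // InDiag lam x} // p x} = (Finset.univ.filter q).card := by
  have e : {x : {x : Box r m // InDiag lam x} // p x} ≃ {j : Fin n // q j} :=
    { toFun := fun x => ⟨⟨x.1.1.2.2, (box_char hlamdef x.1).2.2⟩, by
        apply (hpq _ _).mp
        rw [bx_canon hr hm lam hlamdef x.1]
        exact x.2⟩
      invFun := fun j => ⟨bx hr hm lam hlamdef j.1 j.1.2, (hpq _ _).mpr j.2⟩
      left_inv := fun x => Subtype.ext (bx_canon hr hm lam hlamdef x.1)
      right_inv := fun j => Subtype.ext (Fin.ext rfl) }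
  rw [Nat.card_congr e, Nat.card_eq_fintype_card, Fintype.card_subtype]

lemma sst_chain (hr : 1 ≤ r) (hm : ∀ k, n ≤ m k) (lam : MComp r m)
    (hlamdef : ∀ k i, lam k i = if (k : ℕ) = 0 ∧ (i : ℕ) = 0 then n else 0)
    {mu : MComp r m} {T : {x : Box r m // InDiag lam x} → Entry r m}
    (hT : IsSST (InDiag lam) mu T) :
    ∀ (d j : ℕ) (hj : j + d < n),
      entryLE (T (bx hr hm lam hlamdef j (by omega))) (T (bx hr hm lam hlamdef (j + d) hj)) := by
  intro d
  induction d with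
  | zero => intro j hj; exact entryLE_refl' _
  | succ d ih =>
    intro j hj
    have h1 : j + d < n := by omega
    refine entryLE_trans' (ih j h1) ?_
    exact hT.row_weak (bx hr hm lam hlamdef (j + d) h1)
      (bx hr hm lam hlamdef (j + d + 1) (by omega)) rfl rfl rfl

lemma sst_mono (hr : 1 ≤ r) (hm : ∀ k, n ≤ m k) (lam : MComp r m)
    (hlamdef : ∀ k i, lam k i = if (k : ℕ) = 0 ∧ (i : ℕ) = 0 then n else 0)
    {mu : MComp r m} {T : {x : Box r m // InDiag lam x} → Entry r m}
    (hT : IsSST (InDiag lam) mu T)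
    {j j' : ℕ} (hj : j < n) (hj' : j' < n) (hle : j ≤ j') :
    entryLE (T (bx hr hm lam hlamdef j hj)) (T (bx hr hm lam hlamdef j' hj')) := by
  have he : j + (j' - j) = j' := by omega
  have := sst_chain hr hm lam hlamdef hT (j' - j) j (by omega)
  convert this using 4 <;> omega

end RowAux

/-- For `λ = ((n), ∅, …, ∅)`: `β_{λμ} = 1` if `μ = ((n₁), …, (n_r))` with
`n₁ + … + n_r = n`, and `β_{λμ} = 0` otherwise. -/
theorem beta_row_first (r n : ℕ) (hr : 1 ≤ r) (m : Fin r → ℕ) (hm : ∀ k, n ≤ m k)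
    (lam : MComp r m)
    (hlamdef : ∀ k i, lam k i = if (k : ℕ) = 0 ∧ (i : ℕ) = 0 then n else 0)
    (mu : MComp r m) (hmu : IsMPartition mu) (hmus : size mu = n) :
    ((∃ ns : Fin r → ℕ, (∑ k, ns k = n) ∧
        ∀ k i, mu k i = if (i : ℕ) = 0 then ns k else 0) → beta lam mu = 1) ∧
    ((¬ ∃ ns : Fin r → ℕ, (∑ k, ns k = n) ∧
        ∀ k i, mu k i = if (i : ℕ) = 0 then ns k else 0) → beta lam mu = 0) := by
  classical
  haveI hfin : Finite {x : Box r m // InDiag lam x} := finite_sub hlamdef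
  constructor
  · rintro ⟨ns, hns, hmuns⟩
    -- the candidate tableau
    set T0 : {x : Box r m // InDiag lam x} → Entry r m := fun x =>
      ⟨⟨cf ns x.1.2.2, cf_lt hr hns (box_char hlamdef x).2.2⟩,
       ⟨0, lt_of_lt_of_le (Nat.lt_of_le_of_lt (Nat.zero_le _) (box_char hlamdef x).2.2)
          (hm _)⟩⟩ with hT0def
    -- every SST has all letters equal to 0
    have hlet : ∀ T : {x : Box r m // InDiag lam x} → Entry r m, IsSST (InDiag lam) mu T →
        ∀ x, ((T x).2 : ℕ) = 0 := by
      intro T hT x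
      by_contra h
      have h0 : mu (T x).1 (T x).2 = 0 := by rw [hmuns, if_neg h]
      have hw : mu (T x).1 (T x).2 = Nat.card
          {y : {x : Box r m // InDiag lam x} // T y = ⟨(T x).1, (T x).2⟩} :=
        hT.weight ⟨(T x).1, (T x).2⟩
      haveI : Nonempty {y : {x : Box r m // InDiag lam x} // T y = ⟨(T x).1, (T x).2⟩} :=
        ⟨⟨x, rfl⟩⟩
      have := Nat.card_pos
        (α := {y : {x : Box r m // InDiag lam x} // T y = ⟨(T x).1, (T x).2⟩})
      omega
    -- T0 is semistandard
    have hT0 : IsSST (InDiag lam) mu T0 := by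
      constructor
      · intro x
        have h := (box_char hlamdef x).1
        omega
      · intro x y h1 h2 h3
        have hmono := cf_mono ns (show x.1.2.2 ≤ y.1.2.2 by omega)
        rcases lt_or_eq_of_le hmono with h | h
        · exact Or.inl h
        · exact Or.inr ⟨h, le_rfl⟩
      · intro x y h1 h2 h3
        exfalso
        have hx := (box_char hlamdef x).2.1
        have hy := (box_char hlamdef y).2.1
        omega
      · rintro ⟨c, a⟩
        by_cases ha : (a : ℕ) = 0
        · have h1 : mu c a = ns c := by rw [hmuns, if_pos ha]
          rcases Nat.eq_zero_or_pos n with hn0 | hn0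
          · haveI : IsEmpty {x : Box r m // InDiag lam x} :=
              ⟨fun x => by have := (box_char hlamdef x).2.2; omega⟩
            haveI : IsEmpty {x : {x : Box r m // InDiag lam x} // T0 x = ⟨c, a⟩} :=
              ⟨fun x => IsEmpty.false x.1⟩
            rw [Nat.card_of_isEmpty, h1]
            subst hn0
            exact Finset.sum_eq_zero_iff.mp hns c (Finset.mem_univ c)
          · have hNle : Ns ns ((c : ℕ) + 1) ≤ n := by
              have h := Ns_mono ns (show (c : ℕ) + 1 ≤ r from c.isLt)
              rw [Ns_top, hns] at h
              exact h
            have hpq : ∀ (j : ℕ) (hj : j < n),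
                (T0 (bx hr hm lam hlamdef j hj) = ⟨c, a⟩) ↔
                (Ns ns c ≤ (j : ℕ) ∧ (j : ℕ) < Ns ns ((c : ℕ) + 1)) := by
              intro j hj
              constructor
              · intro h
                have hc := congrArg (fun e : Entry r m => (e.1 : ℕ)) h
                exact (cf_eq_iff hr hns hj c).mp hc
              · intro h
                exact entry_ext' ((cf_eq_iff hr hns hj c).mpr h) ha.symm
            rw [h1, card_eq hr hm lam hlamdef _
              (fun j : Fin n => Ns ns c ≤ (j : ℕ) ∧ (j : ℕ) < Ns ns ((c : ℕ) + 1)) hpq,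
              fin_filter_card (fun a => Ns ns c ≤ a ∧ a < Ns ns ((c : ℕ) + 1))]
            have hIco : (Finset.range n).filter
                (fun a => Ns ns c ≤ a ∧ a < Ns ns ((c : ℕ) + 1))
                = Finset.Ico (Ns ns c) (Ns ns ((c : ℕ) + 1)) := by
              ext b
              simp [Finset.mem_Ico]
              omega
            rw [hIco, Nat.card_Ico, Ns_succ]
            omega
        · have h1 : mu c a = 0 := by rw [hmuns, if_neg ha]
          haveI : IsEmpty {x : {x : Box r m // InDiag lam x} // T0 x = ⟨c, a⟩} := by
            constructor
            rintro ⟨y, hy⟩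
            exact ha ((congrArg (fun e : Entry r m => (e.2 : ℕ)) hy).symm.trans rfl)
          rw [Nat.card_of_isEmpty, h1]
      -- end IsSST
    have hT0sing : IsSingular (InDiag lam) T0 := by
      intro b a
      haveI : IsEmpty {y : {x : Box r m // InDiag lam x} //
          (T0 y).1 = (T0 b).1 ∧ BoxGE y.1 b.1 ∧ ((T0 y).2 : ℕ) = a + 1} := by
        constructor
        rintro ⟨y, _, _, hy3⟩
        have h : (0 : ℕ) = a + 1 := hy3
        omega
      rw [Nat.card_of_isEmpty]
      exact Nat.zero_le _
    -- fibres of any letters-zero SST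
    have hfib_ns : ∀ (T : {x : Box r m // InDiag lam x} → Entry r m), IsSST (InDiag lam) mu T →
        (∀ x, ((T x).2 : ℕ) = 0) → ∀ (c : ℕ) (hc : c < r),
        (Finset.univ.filter
          (fun j : Fin n => ((T (bx hr hm lam hlamdef (j : ℕ) j.2)).1 : ℕ) = c)).card
          = ns ⟨c, hc⟩ := by
      intro T hT hletT c hc
      rcases Nat.eq_zero_or_pos n with hn0 | hn0
      · have h2 : ns ⟨c, hc⟩ = 0 := by
          subst hn0
          exact Finset.sum_eq_zero_iff.mp hns _ (Finset.mem_univ _)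
        rw [h2]
        rw [Finset.card_eq_zero, Finset.filter_eq_empty_iff]
        intro j _
        exact absurd j.isLt (by omega)
      · have h0 : 0 < m ⟨c, hc⟩ := lt_of_lt_of_le hn0 (hm _)
        have hpq : ∀ (j : ℕ) (hj : j < n),
            (T (bx hr hm lam hlamdef j hj) = ⟨⟨c, hc⟩, ⟨0, h0⟩⟩) ↔
            (((T (bx hr hm lam hlamdef j hj)).1 : ℕ) = c) := by
          intro j hj
          constructor
          · intro h
            exact congrArg (fun e : Entry r m => (e.1 : ℕ)) h
          · intro h
            exact entry_ext' h (hletT _)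
        have hcard := card_eq hr hm lam hlamdef
          (fun x => T x = ⟨⟨c, hc⟩, ⟨0, h0⟩⟩)
          (fun j : Fin n => ((T (bx hr hm lam hlamdef (j : ℕ) j.2)).1 : ℕ) = c) hpq
        rw [← hcard, ← hT.weight ⟨⟨c, hc⟩, ⟨0, h0⟩⟩, hmuns]
        simp
    -- uniqueness
    have huniq : ∀ T : {x : Box r m // InDiag lam x} → Entry r m,
        IsSST (InDiag lam) mu T → T = T0 := by
      intro T hT
      have hletT := hlet T hT
      have hgm : Monotone (fun j : Fin n =>
          ((T (bx hr hm lam hlamdef (j : ℕ) j.2)).1 : ℕ)) := by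
        intro a b hab
        exact entryLE_comp_le (sst_mono hr hm lam hlamdef hT a.2 b.2 hab)
      have hg0m : Monotone (fun j : Fin n =>
          ((T0 (bx hr hm lam hlamdef (j : ℕ) j.2)).1 : ℕ)) := by
        intro a b hab
        exact entryLE_comp_le (sst_mono hr hm lam hlamdef hT0 a.2 b.2 hab)
      have hfibs : ∀ c : ℕ,
          (Finset.univ.filter (fun j : Fin n =>
            ((T (bx hr hm lam hlamdef (j : ℕ) j.2)).1 : ℕ) = c)).card
          = (Finset.univ.filter (fun j : Fin n =>
            ((T0 (bx hr hm lam hlamdef (j : ℕ) j.2)).1 : ℕ) = c)).card := by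
        intro c
        by_cases hc : c < r
        · rw [hfib_ns T hT hletT c hc, hfib_ns T0 hT0 (fun _ => rfl) c hc]
        · rw [Finset.card_eq_zero.mpr, Finset.card_eq_zero.mpr] <;>
            (rw [Finset.filter_eq_empty_iff]; intro j _; intro h; apply hc; rw [← h];
              exact Fin.isLt _)
      have hgg := mono_unique hgm hg0m hfibs
      funext x
      rw [← bx_canon hr hm lam hlamdef x]
      exact entry_ext' (congrFun hgg ⟨x.1.2.2, (box_char hlamdef x).2.2⟩)
        ((hletT _).trans rfl)
    unfold beta nSingSST
    rw [Nat.card_eq_one_iff_unique]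
    constructor
    · constructor
      rintro ⟨T, hT, _⟩ ⟨T', hT', _⟩
      exact Subtype.ext ((huniq T hT).trans (huniq T' hT').symm)
    · exact ⟨⟨T0, hT0, hT0sing⟩⟩
  · intro hne
    unfold beta nSingSST
    haveI : IsEmpty {T : {x : Box r m // InDiag lam x} → Entry r m //
        IsSST (InDiag lam) mu T ∧ IsSingular (InDiag lam) T} := by
      constructor
      rintro ⟨T, hT, hS⟩
      apply hne
      have key : ∀ (c : Fin r) (a : Fin (m c)), (a : ℕ) ≠ 0 → mu c a = 0 := by
        intro c a ha
        by_contra hmu0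
        have hw : mu c a = Nat.card
            {x : {x : Box r m // InDiag lam x} // T x = ⟨c, a⟩} := hT.weight ⟨c, a⟩
        have hcne : Nat.card {x : {x : Box r m // InDiag lam x} // T x = ⟨c, a⟩} ≠ 0 := by
          omega
        obtain ⟨⟨x, hx⟩⟩ := (Nat.card_ne_zero.mp hcne).1
        haveI : Nonempty {y : {x : Box r m // InDiag lam x} // (T y).1 = c} :=
          ⟨⟨x, congrArg Sigma.fst hx⟩⟩
        obtain ⟨b, hb⟩ := Finite.exists_max
          (fun y : {y : {x : Box r m // InDiag lam x} // (T y).1 = c} => y.1.1.2.2)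
        have hxb : x.1.2.2 ≤ b.1.1.2.2 := hb ⟨x, congrArg Sigma.fst hx⟩
        have hle := sst_mono hr hm lam hlamdef hT (box_char hlamdef x).2.2
          (box_char hlamdef b.1).2.2 hxb
        rw [bx_canon hr hm lam hlamdef x, bx_canon hr hm lam hlamdef b.1] at hle
        have hcompx : (T x).1 = c := congrArg Sigma.fst hx
        have hcomp : ((T x).1 : ℕ) = ((T b.1).1 : ℕ) := by rw [hcompx, b.2]
        have hax : ((T x).2 : ℕ) = (a : ℕ) := congrArg (fun e : Entry r m => (e.2 : ℕ)) hx
        have hlet_b : 1 ≤ ((T b.1).2 : ℕ) := by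
          unfold entryLE at hle
          omega
        have hs := hS b.1 (((T b.1).2 : ℕ) - 1)
        haveI : Nonempty {y : {x : Box r m // InDiag lam x} //
            (T y).1 = (T b.1).1 ∧ BoxGE y.1 b.1.1 ∧
              ((T y).2 : ℕ) = (((T b.1).2 : ℕ) - 1) + 1} :=
          ⟨⟨b.1, rfl, Or.inr ⟨rfl, Or.inr ⟨rfl, le_rfl⟩⟩, by omega⟩⟩
        haveI : IsEmpty {y : {x : Box r m // InDiag lam x} //
            (T y).1 = (T b.1).1 ∧ BoxGE y.1 b.1.1 ∧
              ((T y).2 : ℕ) = ((T b.1).2 : ℕ) - 1} := by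
          constructor
          rintro ⟨y, hy1, hy2, hy3⟩
          have hyc : (T y).1 = c := hy1.trans b.2
          have hymax : y.1.2.2 ≤ b.1.1.2.2 := hb ⟨y, hyc⟩
          unfold BoxGE at hy2
          have hky := (box_char hlamdef y).1
          have hkb := (box_char hlamdef b.1).1
          have hjj : y.1.2.2 = b.1.1.2.2 := by omega
          have hyb : y = b.1 := box_eq hlamdef _ _ hjj
          rw [hyb] at hy3
          omega
        have h1 := Nat.card_pos (α := {y : {x : Box r m // InDiag lam x} //
            (T y).1 = (T b.1).1 ∧ BoxGE y.1 b.1.1 ∧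
              ((T y).2 : ℕ) = (((T b.1).2 : ℕ) - 1) + 1})
        have hz : Nat.card {y : {x : Box r m // InDiag lam x} //
            (T y).1 = (T b.1).1 ∧ BoxGE y.1 b.1.1 ∧
              ((T y).2 : ℕ) = ((T b.1).2 : ℕ) - 1} = 0 := Nat.card_of_isEmpty
        rw [hz] at hs
        omega
      refine ⟨fun k => if h : 0 < m k then mu k ⟨0, h⟩ else 0, ?_, ?_⟩
      · have hsz := hmus
        unfold size at hsz
        rw [← hsz]
        apply Finset.sum_congr rfl
        intro k _
        beta_reduce
        by_cases hk : 0 < m k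
        · rw [dif_pos hk]
          symm
          apply Finset.sum_eq_single (⟨0, hk⟩ : Fin (m k))
          · intro b _ hbne
            exact key k b (fun h => hbne (Fin.ext h))
          · intro habs
            exact absurd (Finset.mem_univ _) habs
        · rw [dif_neg hk]
          symm
          haveI : IsEmpty (Fin (m k)) := ⟨fun i => absurd i.isLt (by omega)⟩
          rw [Finset.univ_eq_empty, Finset.sum_empty]
      · intro k i
        beta_reduce
        by_cases hi : (i : ℕ) = 0
        · have h0 : 0 < m k := i.pos
          rw [if_pos hi, dif_pos h0]
          congr 1
          exact Fin.ext hi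
        · rw [if_neg hi]
          exact key k i hi
    exact Nat.card_of_isEmpty

end CQSA
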